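/- If a finite set of open unit hemispheres covers S^2 and has a minimal covering subset of size exactly 6, then the hemispheres in that subset are the six hemispheres determined by three mutually distinct pairs of opposite unit vectors; the intersection of the great-circle boundary of any one hemisphere in the set with the remaining five hemispheres consists of two antipodal pairs of open semicircles. -/

import Mathlib

open scoped RealInnerProductSpace

noncomputable local instance : DecidableEq (EuclideanSpace ℝ (Fin 3)) :=
  Classical.decEq _

/-- The unit sphere `S² ⊆ ℝ³`. -/
noncomputable def unitSphere : Set (EuclideanSpace ℝ (Fin 3)) := Metric.sphere 0 1

/-- The open unit hemisphere `H(v) = {x ∈ S² | ⟪v, x⟫ > 0}`. -/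
noncomputable def openHemisphere (v : EuclideanSpace ℝ (Fin 3)) :
    Set (EuclideanSpace ℝ (Fin 3)) := {x ∈ unitSphere | 0 < ⟪v, x⟫}

/-- The boundary great circle `∂H(v) = {x ∈ S² | ⟪v, x⟫ = 0}`. -/
noncomputable def greatCircle (v : EuclideanSpace ℝ (Fin 3)) :
    Set (EuclideanSpace ℝ (Fin 3)) := {x ∈ unitSphere | ⟪v, x⟫ = 0}

/-- The trace of the open hemisphere `H(w)` on the great circle `∂H(v)`;
for `w ≠ ±v` this is an open semicircle of `∂H(v)`. -/
noncomputable def hemiTrace (v w : EuclideanSpace ℝ (Fin 3)) :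
    Set (EuclideanSpace ℝ (Fin 3)) := greatCircle v ∩ openHemisphere w

/-!
Covering `S²` by the open hemispheres `H(v)`, `v ∈ R`, means that `R` positively spans `ℝ³`
(compactness of the sphere and a separating hyperplane give one direction). Let `R` be a minimal
positively spanning set with six elements and `v ∈ R`. By the conic Carathéodory theorem, `-v` is a
positive combination of a linearly independent `B ⊆ R \ {v}`, and then `insert v B` spans the
subspace `span B` positively. If `B` has three elements, `insert v B` alone spans `ℝ³`; if it has
two, it spans a plane, and together with one vector on each side of that plane it again spans
`ℝ³`. Either way at most five elements of `R` suffice, contradicting minimality. Hence `B = {b}`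
with `b` a positive multiple of `-v`, i.e. `R = -R`, so `R` consists of three antipodal pairs. The
traces of `H(±p)` on `∂H(x)` are the two open semicircles cut out by the plane `p^⊥`, whose two
common endpoints are limits of rotations inside `∂H(x)`.
-/

local notation "E3" => EuclideanSpace ℝ (Fin 3)

open Finset Module

section InnerProductSpace

variable {E : Type*} [NormedAddCommGroup E] [InnerProductSpace ℝ E]

lemma abs_real_inner_lt_one_of_ne {x p : E} (hx : ‖x‖ = 1) (hp : ‖p‖ = 1) (hpx : p ≠ x)
    (hpnx : p ≠ -x) : |⟪x, p⟫| < 1 := by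
  refine abs_lt.2 ⟨(neg_one_le_real_inner_of_norm_eq_one hx hp).lt_of_ne fun h => hpnx ?_,
    (real_inner_le_one_of_norm_eq_one hx hp).lt_of_ne fun h => hpx ?_⟩
  · exact neg_eq_iff_eq_neg.1 ((inner_eq_neg_one_iff_of_norm_eq_one hx hp).1 h.symm).symm
  · exact ((inner_eq_one_iff_of_norm_eq_one hx hp).1 h).symm

variable [FiniteDimensional ℝ E]

lemma exists_ne_zero_forall_inner_eq_zero_mem (P : Submodule ℝ E)
    (hP : finrank ℝ P + 1 = finrank ℝ E) : ∃ n ≠ (0 : E), ∀ z, ⟪z, n⟫ = 0 → z ∈ P := by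
  have hPo : finrank ℝ Pᗮ = 1 := by linarith [P.finrank_add_finrank_orthogonal]
  obtain ⟨n, hnP, hn⟩ := Submodule.exists_mem_ne_zero_of_ne_bot
    (fun h => by rw [h, finrank_bot] at hPo; exact zero_ne_one hPo : Pᗮ ≠ ⊥)
  have hle : P ≤ (ℝ ∙ n)ᗮ := fun y hy => Submodule.mem_orthogonal_singleton_iff_inner_right.2
    (Submodule.inner_left_of_mem_orthogonal hy hnP)
  have heq : P = (ℝ ∙ n)ᗮ := by
    refine Submodule.eq_of_le_of_finrank_eq hle ?_
    have := (ℝ ∙ n).finrank_add_finrank_orthogonal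
    rw [finrank_span_singleton hn] at this
    omega
  refine ⟨n, hn, fun z hz => ?_⟩
  rwa [heq, Submodule.mem_orthogonal_singleton_iff_inner_right, real_inner_comm]

lemma exists_pos_forall_norm_eq_one_le_inner {s : Finset E}
    (h : ∀ x : E, ‖x‖ = 1 → ∃ t ∈ s, 0 < ⟪t, x⟫) :
    ∃ ε > 0, ∀ x : E, ‖x‖ = 1 → ∃ t ∈ s, ε ≤ ⟪t, x⟫ := by
  rcases (Metric.sphere (0 : E) 1).eq_empty_or_nonempty with h0 | ⟨x₀, hx₀⟩
  · refine ⟨1, one_pos, fun x hx => ?_⟩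
    have : x ∈ Metric.sphere (0 : E) 1 := by simpa using hx
    simp [h0] at this
  obtain ⟨t₀, ht₀, -⟩ := h x₀ (by simpa using hx₀)
  have hs : s.Nonempty := ⟨t₀, ht₀⟩
  -- `ε` is the minimum over the sphere of the largest of the inner products
  have hf : Continuous fun x : E => s.sup' hs (⟪·, x⟫) :=
    Continuous.finset_sup'_apply hs fun t _ => by fun_prop
  obtain ⟨x₁, hx₁, hmin⟩ := (isCompact_sphere (0 : E) 1).exists_isMinOn ⟨x₀, hx₀⟩ hf.continuousOn
  obtain ⟨t₁, ht₁, hpos⟩ := h x₁ (by simpa using hx₁)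
  refine ⟨_, hpos.trans_le (le_sup' (⟪·, x₁⟫) ht₁), fun x hx => ?_⟩
  obtain ⟨t, ht, hft⟩ := exists_mem_eq_sup' hs (⟪·, x⟫)
  exact ⟨t, ht, hft ▸ hmin (by simpa using hx)⟩

lemma mem_convexHull_of_norm_lt {s : Finset E} (hs : s.Nonempty) {ε : ℝ}
    (hε : ∀ x : E, ‖x‖ = 1 → ∃ t ∈ s, ε ≤ ⟪t, x⟫) {y : E} (hy : ‖y‖ < ε) :
    y ∈ convexHull ℝ (s : Set E) := by
  by_contra hys
  obtain ⟨f, u, hfu, huy⟩ := geometric_hahn_banach_closed_point (convex_convexHull ℝ _)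
    (s.finite_toSet.isCompact_convexHull ℝ).isClosed hys
  set z := (InnerProductSpace.toDual ℝ E).symm f
  have hz : ∀ w, f w = ⟪z, w⟫ := fun w => InnerProductSpace.toDual_symm_apply.symm
  obtain ⟨t₀, ht₀⟩ := hs
  have hz0 : z ≠ 0 := by
    rintro h
    have := hfu t₀ (subset_convexHull ℝ _ ht₀)
    simp only [hz, h, inner_zero_left] at this huy
    linarith
  obtain ⟨t, ht, hεt⟩ := hε (‖z‖⁻¹ • z) (norm_smul_inv_norm (𝕜 := ℝ) hz0)
  rw [real_inner_smul_right, real_inner_comm, le_inv_mul_iff₀ (norm_pos_iff.2 hz0)] at hεt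
  have hzt := hfu t (subset_convexHull ℝ _ ht)
  rw [hz] at hzt huy
  nlinarith [real_inner_le_norm z y, norm_pos_iff.2 hz0]

end InnerProductSpace

namespace PointedCone

section Module

variable {E : Type*} [AddCommGroup E] [Module ℝ E]

lemma mem_hull_finset_iff {s : Finset E} {y : E} :
    y ∈ hull ℝ (s : Set E) ↔ ∃ c : E → ℝ, (∀ b ∈ s, 0 ≤ c b) ∧ ∑ b ∈ s, c b • b = y := by
  constructor
  · intro hy
    obtain ⟨f, -, rfl⟩ := Submodule.mem_span_finset.1 hy
    exact ⟨fun b => f b, fun b _ => (f b).2, rfl⟩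
  · rintro ⟨c, hc, rfl⟩
    exact Submodule.sum_mem _ fun b hb => smul_mem _ (hc b hb) (subset_hull (mem_coe.2 hb))

lemma exists_subset_pos_sum_eq_of_mem_hull {s : Finset E} {y : E}
    (hy : y ∈ hull ℝ (s : Set E)) :
    ∃ t ⊆ s, ∃ c : E → ℝ, (∀ b ∈ t, 0 < c b) ∧ ∑ b ∈ t, c b • b = y := by
  classical
  obtain ⟨c, hc, rfl⟩ := mem_hull_finset_iff.1 hy
  refine ⟨s.filter (0 < c ·), filter_subset _ s, c, fun b hb => (mem_filter.1 hb).2, ?_⟩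
  exact sum_filter_of_ne fun b hb hcb =>
    (hc b hb).lt_of_ne' fun h => hcb (by rw [h, zero_smul])

lemma neg_mem_hull_of_neg_mem_hull_insert {s : Set E} {v : E}
    (h : -v ∈ hull ℝ (insert v s)) : -v ∈ hull ℝ s := by
  obtain ⟨a, z, hz, hvz⟩ := Submodule.mem_span_insert.1 h
  rw [← Nonneg.coe_smul] at hvz
  have ha : (0 : ℝ) < 1 + a := add_pos_of_pos_of_nonneg one_pos a.2
  have hv : -v = (1 + (a : ℝ))⁻¹ • z := by
    rw [eq_inv_smul_iff₀ ha.ne']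
    linear_combination (norm := module) hvz
  exact hv ▸ smul_mem _ (inv_nonneg.2 ha.le) hz

variable [DecidableEq E]

lemma exists_mem_hull_erase_of_not_linearIndepOn {s : Finset E} {y : E}
    (hy : y ∈ hull ℝ (s : Set E)) (hs : ¬ LinearIndepOn ℝ id (s : Set E)) :
    ∃ b ∈ s, y ∈ hull ℝ (s.erase b : Set E) := by
  obtain ⟨c, hc, rfl⟩ := mem_hull_finset_iff.1 hy
  rw [linearIndepOn_finset_iff] at hs
  push Not at hs
  obtain ⟨μ, hμ, b₁, hb₁, hμb₁⟩ := hs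
  replace hμ : ∑ b ∈ s, μ b • b = 0 := hμ
  wlog hpos : 0 < μ b₁ generalizing μ
  · refine this (-μ) (neg_ne_zero.2 hμb₁) (by simp [hμ]) ?_
    simpa using lt_of_le_of_ne (not_lt.1 hpos) hμb₁
  -- subtract the largest multiple of the dependence `μ` that keeps all coefficients nonnegative
  obtain ⟨b₀, hb₀, hmin⟩ := (s.filter (0 < μ ·)).exists_min_image (fun b => c b / μ b)
    ⟨b₁, mem_filter.2 ⟨hb₁, hpos⟩⟩
  rw [mem_filter] at hb₀
  set r := c b₀ / μ b₀
  have hr : 0 ≤ r := div_nonneg (hc b₀ hb₀.1) hb₀.2.le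
  refine ⟨b₀, hb₀.1, mem_hull_finset_iff.2 ⟨fun b => c b - r * μ b, fun b hb => ?_, ?_⟩⟩
  · have hb := mem_of_mem_erase hb
    rcases lt_or_ge 0 (μ b) with hμb | hμb
    · linarith [(le_div_iff₀ hμb).1 (hmin b (mem_filter.2 ⟨hb, hμb⟩))]
    · nlinarith [hc b hb]
  · rw [sum_erase _ (by simp [r, div_mul_cancel₀ _ hb₀.2.ne'])]
    simp only [sub_smul, sum_sub_distrib, mul_smul, ← smul_sum, hμ, smul_zero, sub_zero]

theorem exists_linearIndepOn_subset_of_mem_hull {s : Finset E} {y : E}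
    (hy : y ∈ hull ℝ (s : Set E)) :
    ∃ t ⊆ s, LinearIndepOn ℝ id (t : Set E) ∧ y ∈ hull ℝ (t : Set E) := by
  induction s using Finset.strongInduction with
  | H s ih =>
    by_cases hs : LinearIndepOn ℝ id (s : Set E)
    · exact ⟨s, subset_rfl, hs, hy⟩
    obtain ⟨b, hb, hyb⟩ := exists_mem_hull_erase_of_not_linearIndepOn hy hs
    obtain ⟨t, hts, ht, hyt⟩ := ih _ (erase_ssubset hb) hyb
    exact ⟨t, hts.trans (erase_subset b s), ht, hyt⟩

lemma span_le_hull_insert_of_sum_eq_neg {t : Finset E} {c : E → ℝ} {v : E}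
    (hc : ∀ b ∈ t, 0 < c b) (hsum : ∑ b ∈ t, c b • b = -v) :
    (Submodule.span ℝ (t : Set E) : PointedCone ℝ E) ≤
      hull ℝ ((insert v t : Finset E) : Set E) := by
  refine le_trans ?_ (lineal_le _)
  rw [ofSubmodule_le_ofSubmodule, Submodule.span_le]
  intro b hb
  have hb' : -b = (c b)⁻¹ • (v + ∑ b' ∈ t.erase b, c b' • b') := by
    rw [← add_sum_erase t _ hb] at hsum
    rw [eq_inv_smul_iff₀ (hc b hb).ne', smul_neg]
    linear_combination (norm := module) -hsum
  have hv : v ∈ hull ℝ ((insert v t : Finset E) : Set E) := subset_hull (mem_insert_self v t)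
  have ht : ∀ b' ∈ t, b' ∈ hull ℝ ((insert v t : Finset E) : Set E) :=
    fun b' hb' => subset_hull (mem_insert_of_mem hb')
  refine mem_lineal.2 ⟨ht b hb, hb' ▸ smul_mem _ (inv_nonneg.2 (hc b hb).le) ?_⟩
  exact Submodule.add_mem _ hv (Submodule.sum_mem _ fun b' hb' =>
    smul_mem _ (hc b' (mem_of_mem_erase hb')).le (ht b' (mem_of_mem_erase hb')))

end Module

section InnerProductSpace

variable {E : Type*} [NormedAddCommGroup E] [InnerProductSpace ℝ E]

lemma exists_inner_pos_of_hull_eq_top {s : Set E} (h : hull ℝ s = ⊤) {x : E} (hx : x ≠ 0) :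
    ∃ t ∈ s, 0 < ⟪t, x⟫ := by
  by_contra! hs
  have hle : hull ℝ s ≤ PointedCone.dual (innerₗ E) {-x} :=
    Submodule.span_le.2 fun t ht => by simpa [real_inner_comm] using hs t ht
  have hxx : ⟪x, x⟫ ≤ 0 := by simpa using hle (h ▸ Submodule.mem_top : x ∈ hull ℝ s)
  exact hx (real_inner_self_nonpos.1 hxx)

lemma mem_hull_of_inner_nonneg {T : Set E} {n p y : E}
    (hT : ∀ z, ⟪z, n⟫ = 0 → z ∈ hull ℝ T) (hp : p ∈ T) (hpn : 0 < ⟪p, n⟫)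
    (hy : 0 ≤ ⟪y, n⟫) : y ∈ hull ℝ T := by
  set a := ⟪y, n⟫ / ⟪p, n⟫
  have hz : ⟪y - a • p, n⟫ = 0 := by
    rw [inner_sub_left, real_inner_smul_left, div_mul_cancel₀ _ hpn.ne', sub_self]
  have := Submodule.add_mem _ (hT _ hz) (smul_mem _ (div_nonneg hy hpn.le) (subset_hull hp))
  rwa [sub_add_cancel] at this

lemma hull_eq_top_of_inner_pos_of_inner_neg {T : Set E} {n p m : E}
    (hT : ∀ z, ⟪z, n⟫ = 0 → z ∈ hull ℝ T) (hp : p ∈ T) (hpn : 0 < ⟪p, n⟫)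
    (hm : m ∈ T) (hmn : ⟪m, n⟫ < 0) : hull ℝ T = ⊤ := by
  refine Submodule.eq_top_iff'.2 fun y => ?_
  rcases le_total 0 ⟪y, n⟫ with hy | hy
  · exact mem_hull_of_inner_nonneg hT hp hpn hy
  · refine mem_hull_of_inner_nonneg (n := -n) (fun z hz => hT z ?_) hm ?_ ?_ <;>
      simp_all [inner_neg_right]

lemma exists_hull_erase_eq_top_of_inner_eq_zero [DecidableEq E] {R C : Finset E} {n : E}
    (hR : hull ℝ (R : Set E) = ⊤) (hn : n ≠ 0) (hC : ∀ z, ⟪z, n⟫ = 0 → z ∈ hull ℝ (C : Set E))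
    (hCR : C ⊆ R) (hcard : #C + 2 < #R) : ∃ b ∈ R, hull ℝ (R.erase b : Set E) = ⊤ := by
  obtain ⟨p, hpR, hpn⟩ := exists_inner_pos_of_hull_eq_top hR hn
  obtain ⟨m, hmR, hmn⟩ := exists_inner_pos_of_hull_eq_top hR (neg_ne_zero.2 hn)
  have : #(C ∪ {p, m}) < #R :=
    (card_union_le _ _).trans_lt (by linarith [card_le_two (a := p) (b := m)])
  obtain ⟨b, hbR, hb⟩ := exists_mem_notMem_of_card_lt_card this
  simp only [mem_union, mem_insert, mem_singleton, not_or] at hb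
  refine ⟨b, hbR, hull_eq_top_of_inner_pos_of_inner_neg (p := p) (m := m)
    (fun z hz => Submodule.span_mono ?_ (hC z hz)) ?_ hpn ?_ (by simpa [inner_neg_right] using hmn)⟩
  · exact coe_subset.2 (subset_erase.2 ⟨hCR, hb.1⟩)
  · exact mem_erase.2 ⟨Ne.symm hb.2.1, hpR⟩
  · exact mem_erase.2 ⟨Ne.symm hb.2.2, hmR⟩

variable [FiniteDimensional ℝ E]

theorem hull_eq_top_iff_forall_exists_inner_pos {s : Finset E} :
    hull ℝ (s : Set E) = ⊤ ↔ ∀ x : E, ‖x‖ = 1 → ∃ t ∈ s, 0 < ⟪t, x⟫ := by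
  refine ⟨fun h x hx => exists_inner_pos_of_hull_eq_top h (norm_ne_zero_iff.1 (by simp [hx])),
    fun h => Submodule.eq_top_iff'.2 fun y => ?_⟩
  rcases eq_or_ne y 0 with rfl | hy
  · exact zero_mem _
  obtain ⟨ε, hε, hεs⟩ := exists_pos_forall_norm_eq_one_le_inner h
  obtain ⟨t₀, ht₀, -⟩ := h (‖y‖⁻¹ • y) (norm_smul_inv_norm (𝕜 := ℝ) hy)
  have hy0 : 0 < ‖y‖ := norm_pos_iff.2 hy
  have hsmall : ‖(ε / (2 * ‖y‖)) • y‖ < ε := by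
    rw [norm_smul, Real.norm_of_nonneg (by positivity), div_mul_eq_mul_div,
      mul_div_mul_right _ _ hy0.ne']
    linarith
  have hmem : (ε / (2 * ‖y‖)) • y ∈ hull ℝ (s : Set E) :=
    convexHull_min subset_hull (hull ℝ _).convex (mem_convexHull_of_norm_lt ⟨t₀, ht₀⟩ hεs hsmall)
  have hy' : y = (2 * ‖y‖ / ε) • (ε / (2 * ‖y‖)) • y := by
    rw [smul_smul, div_mul_div_cancel₀ (by positivity), div_self (by positivity), one_smul]
  exact hy' ▸ smul_mem _ (by positivity) hmem

theorem exists_sameRay_neg_of_forall_hull_erase_ne_top [DecidableEq E] (hE : finrank ℝ E = 3)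
    {R : Finset E} (hR : hull ℝ (R : Set E) = ⊤)
    (hmin : ∀ b ∈ R, hull ℝ (R.erase b : Set E) ≠ ⊤) (hcard : 6 ≤ #R) {v : E} (hv : v ∈ R) :
    ∃ w ∈ R, SameRay ℝ w (-v) := by
  have hnv : -v ∈ hull ℝ (R.erase v : Set E) := neg_mem_hull_of_neg_mem_hull_insert <| by
    rw [← coe_insert, insert_erase hv, hR]
    exact Submodule.mem_top
  obtain ⟨B₀, hB₀, hli, hB₀v⟩ := exists_linearIndepOn_subset_of_mem_hull hnv
  obtain ⟨B, hBB₀, c, hc, hsum⟩ := exists_subset_pos_sum_eq_of_mem_hull hB₀v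
  have hBR : B ⊆ R := hBB₀.trans (hB₀.trans (erase_subset v R))
  have hCR : insert v B ⊆ R := insert_subset hv hBR
  have hspan := span_le_hull_insert_of_sum_eq_neg hc hsum
  have hrank : finrank ℝ (Submodule.span ℝ (B : Set E)) = #B :=
    finrank_span_finset_eq_card (hli.mono (coe_subset.2 hBB₀))
  have hB3 : #B ≤ 3 := hE ▸ hrank ▸ Submodule.finrank_le _
  interval_cases hB : #B
  · obtain rfl : B = ∅ := card_eq_zero.1 hB
    obtain rfl : v = 0 := by simpa [eq_comm] using hsum
    exact ⟨0, hv, SameRay.zero_left _⟩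
  · obtain ⟨b, rfl⟩ := card_eq_one.1 hB
    rw [sum_singleton] at hsum
    have hb := mem_singleton_self b
    exact ⟨b, hBR hb, hsum ▸ SameRay.sameRay_pos_smul_right b (hc b hb)⟩
  · obtain ⟨n, hn, hnB⟩ := exists_ne_zero_forall_inner_eq_zero_mem _ (by rw [hrank, hE])
    obtain ⟨b, hb, htop⟩ := exists_hull_erase_eq_top_of_inner_eq_zero hR hn
      (fun z hz => hspan (hnB z hz)) hCR (by linarith [card_insert_le v B])
    exact absurd htop (hmin b hb)
  · have htop : hull ℝ ((insert v B : Finset E) : Set E) = ⊤ := by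
      simpa [Submodule.eq_top_of_finrank_eq (hrank.trans hE.symm)] using hspan
    obtain ⟨b, hbR, hb⟩ := exists_mem_notMem_of_card_lt_card (s := insert v B)
      (hcard.trans_lt' (by linarith [card_insert_le v B]))
    refine absurd (top_le_iff.1 (htop ▸ Submodule.span_mono ?_)) (hmin b hbR)
    exact coe_subset.2 (subset_erase.2 ⟨hCR, hb⟩)

end InnerProductSpace

end PointedCone

namespace Finset

variable {G : Type*} [AddCommGroup G] [DecidableEq G] {R : Finset G}

lemma neg_mem_sdiff_pair (hneg : ∀ x ∈ R, -x ∈ R) (u : G) :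
    ∀ x ∈ R \ {u, -u}, -x ∈ R \ {u, -u} := by
  intro x hx
  simp only [mem_sdiff, mem_insert, mem_singleton, not_or] at hx ⊢
  exact ⟨hneg x hx.1, fun h => hx.2.2 (neg_eq_iff_eq_neg.1 h), fun h => hx.2.1 (neg_inj.1 h)⟩

lemma insert_insert_neg_sdiff_pair {u : G} (hu : u ∈ R) (hnu : -u ∈ R) :
    insert u (insert (-u) (R \ {u, -u})) = R := by
  ext x
  simp only [mem_insert, mem_sdiff, mem_singleton]
  by_cases hx : x = u ∨ x = -u <;> aesop

variable [IsAddTorsionFree G]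

lemma card_sdiff_pair_add_two (hneg : ∀ x ∈ R, -x ∈ R) (h0 : (0 : G) ∉ R) {u : G} (hu : u ∈ R) :
    #(R \ {u, -u}) + 2 = #R := by
  have hsub : {u, -u} ⊆ R := insert_subset hu (singleton_subset_iff.2 (hneg u hu))
  have hne : u ≠ -u := fun h => h0 (self_eq_neg.1 h ▸ hu)
  have := card_le_card hsub
  rw [card_sdiff_of_subset hsub, card_pair hne] at *
  omega

lemma exists_eq_pair_pair (hneg : ∀ x ∈ R, -x ∈ R) (h0 : (0 : G) ∉ R) (hcard : #R = 4) :
    ∃ p q : G, R = {p, -p, q, -q} := by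
  obtain ⟨p, hp⟩ := card_pos.1 (by omega : 0 < #R)
  have hR' := card_sdiff_pair_add_two hneg h0 hp
  obtain ⟨q, hq⟩ := card_pos.1 (by omega : 0 < #(R \ {p, -p}))
  have hR'' := card_sdiff_pair_add_two (neg_mem_sdiff_pair hneg p)
    (fun h => h0 (mem_sdiff.1 h).1) hq
  rw [← insert_insert_neg_sdiff_pair hp (hneg p hp),
    ← insert_insert_neg_sdiff_pair hq (neg_mem_sdiff_pair hneg p q hq),
    card_eq_zero.1 (by omega : #((R \ {p, -p}) \ {q, -q}) = 0)]
  exact ⟨p, q, rfl⟩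

lemma exists_eq_three_pairs (hneg : ∀ x ∈ R, -x ∈ R) (h0 : (0 : G) ∉ R) (hcard : #R = 6) :
    ∃ u v w : G, R = {u, -u, v, -v, w, -w} := by
  obtain ⟨u, hu⟩ := card_pos.1 (by omega : 0 < #R)
  have hR' := card_sdiff_pair_add_two hneg h0 hu
  obtain ⟨v, w, hvw⟩ := exists_eq_pair_pair (neg_mem_sdiff_pair hneg u)
    (fun h => h0 (mem_sdiff.1 h).1) (by omega)
  exact ⟨u, v, w, by rw [← insert_insert_neg_sdiff_pair hu (hneg u hu), hvw]⟩

end Finset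

lemma mem_unitSphere {x : E3} : x ∈ unitSphere ↔ ‖x‖ = 1 := mem_sphere_zero_iff_norm

lemma mem_greatCircle {x z : E3} : z ∈ greatCircle x ↔ ‖z‖ = 1 ∧ ⟪x, z⟫ = 0 := by
  simp [greatCircle, mem_unitSphere]

lemma isClosed_greatCircle (x : E3) : IsClosed (greatCircle x) :=
  Metric.isClosed_sphere.inter (isClosed_eq (by fun_prop) continuous_const)

lemma covers_iff_hull_eq_top (s : Finset E3) :
    unitSphere ⊆ ⋃ v ∈ s, openHemisphere v ↔ PointedCone.hull ℝ (s : Set E3) = ⊤ := by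
  rw [PointedCone.hull_eq_top_iff_forall_exists_inner_pos]
  simp +contextual [Set.subset_def, openHemisphere, mem_unitSphere]

theorem neg_mem_of_minimal_cover {R : Finset E3} (hunit : ∀ v ∈ R, ‖v‖ = 1)
    (hcover : unitSphere ⊆ ⋃ v ∈ R, openHemisphere v)
    (hmin : ∀ s ∈ R, ¬ unitSphere ⊆ ⋃ v ∈ R.erase s, openHemisphere v) (hcard : 6 ≤ #R)
    {v : E3} (hv : v ∈ R) : -v ∈ R := by
  obtain ⟨w, hw, hwv⟩ := PointedCone.exists_sameRay_neg_of_forall_hull_erase_ne_top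
    finrank_euclideanSpace_fin ((covers_iff_hull_eq_top R).1 hcover)
    (fun b hb h => hmin b hb ((covers_iff_hull_eq_top _).2 h)) hcard hv
  rwa [← hwv.eq_of_norm_eq (by rw [norm_neg, hunit w hw, hunit v hv])]

lemma cos_smul_add_sin_smul_mem_greatCircle {x z e : E3} (hz : z ∈ greatCircle x)
    (he : e ∈ greatCircle x) (hze : ⟪z, e⟫ = 0) (θ : ℝ) :
    Real.cos θ • z + Real.sin θ • e ∈ greatCircle x := by
  rw [mem_greatCircle] at *
  refine ⟨?_, by simp [inner_add_right, real_inner_smul_right, hz.2, he.2]⟩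
  have h := norm_add_sq_eq_norm_sq_add_norm_sq_real (x := Real.cos θ • z) (y := Real.sin θ • e)
    (by simp [real_inner_smul_left, real_inner_smul_right, hze])
  simp only [norm_smul, hz.1, he.1, Real.norm_eq_abs, mul_one, abs_mul_abs_self] at h
  rw [← sq, ← sq, ← sq, Real.cos_sq_add_sin_sq] at h
  exact (pow_eq_one_iff_of_nonneg (norm_nonneg _) two_ne_zero).1 h

lemma exists_mem_greatCircle_inner_pos {x p : E3} (hx : ‖x‖ = 1) (hp : ‖p‖ = 1)
    (h : |⟪x, p⟫| < 1) :
    ∃ e ∈ greatCircle x, 0 < ⟪p, e⟫ ∧ ∀ z ∈ greatCircle x, ⟪p, z⟫ = 0 → ⟪z, e⟫ = 0 := by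
  -- `e` is the normalized component of `p` orthogonal to `x`
  set w := p - ⟪x, p⟫ • x
  have hxw : ⟪x, w⟫ = 0 := by simp [w, inner_sub_right, real_inner_smul_right, hx]
  have hpw : 0 < ⟪p, w⟫ := by
    have : ⟪p, w⟫ = 1 - ⟪x, p⟫ ^ 2 := by
      simp [w, inner_sub_right, real_inner_smul_right, hp, real_inner_comm x p, sq]
    rw [this]
    nlinarith [abs_lt.1 h]
  have hw : w ≠ 0 := by rintro h; simp [h] at hpw
  refine ⟨‖w‖⁻¹ • w, mem_greatCircle.2 ⟨norm_smul_inv_norm (𝕜 := ℝ) hw, ?_⟩, ?_, fun z hz hpz => ?_⟩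
  · rw [real_inner_smul_right, hxw, mul_zero]
  · rw [real_inner_smul_right]
    exact mul_pos (inv_pos.2 (norm_pos_iff.2 hw)) hpw
  · rw [mem_greatCircle] at hz
    simp [w, real_inner_smul_right, inner_sub_right, real_inner_comm p z, real_inner_comm x z,
      hpz, hz.2]

lemma hemiTrace_nonempty {x p : E3} (hx : ‖x‖ = 1) (hp : ‖p‖ = 1) (h : |⟪x, p⟫| < 1) :
    (hemiTrace x p).Nonempty := by
  obtain ⟨e, he, hpe, -⟩ := exists_mem_greatCircle_inner_pos hx hp h
  exact ⟨e, he, he.1, hpe⟩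

open Filter Topology in
lemma closure_hemiTrace_union_hemiTrace_neg {x p : E3} (hx : ‖x‖ = 1) (hp : ‖p‖ = 1)
    (h : |⟪x, p⟫| < 1) : closure (hemiTrace x p ∪ hemiTrace x (-p)) = greatCircle x := by
  obtain ⟨e, he, hpe, hperp⟩ := exists_mem_greatCircle_inner_pos hx hp h
  refine (closure_minimal (Set.union_subset Set.inter_subset_left Set.inter_subset_left)
    (isClosed_greatCircle x)).antisymm fun z hz => ?_
  rcases lt_trichotomy ⟪p, z⟫ 0 with hpz | hpz | hpz
  · exact subset_closure (Or.inr ⟨hz, hz.1, by rw [inner_neg_left]; linarith⟩)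
  · set γ : ℝ → E3 := fun θ => Real.cos θ • z + Real.sin θ • e
    have hγ : Tendsto γ (𝓝[>] 0) (𝓝 z) := by
      have : Continuous γ := by fun_prop
      simpa [γ] using (this.tendsto 0).mono_left nhdsWithin_le_nhds
    refine mem_closure_of_tendsto hγ ?_
    filter_upwards [Ioo_mem_nhdsGT Real.pi_pos] with θ hθ
    have hγθ := cos_smul_add_sin_smul_mem_greatCircle hz he (hperp z hz hpz) θ
    refine Or.inl ⟨hγθ, hγθ.1, ?_⟩
    simp only [γ, inner_add_right, real_inner_smul_right, hpz, mul_zero, zero_add]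
    exact mul_pos (Real.sin_pos_of_pos_of_lt_pi hθ.1 hθ.2) hpe
  · exact subset_closure (Or.inl ⟨hz, hz.1, hpz⟩)

theorem minimal_six_cover_structure_general
    (S : Finset (EuclideanSpace ℝ (Fin 3))) (hS : ∀ v ∈ S, ‖v‖ = 1)
    (R : Finset (EuclideanSpace ℝ (Fin 3))) (hRS : R ⊆ S) (hcard : R.card = 6)
    (hRcover : unitSphere ⊆ ⋃ v ∈ R, openHemisphere v)
    (hmin : ∀ s ∈ R, ¬ unitSphere ⊆ ⋃ v ∈ R.erase s, openHemisphere v) :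
    (∃ u v w : EuclideanSpace ℝ (Fin 3), R = {u, -u, v, -v, w, -w}) ∧
    ∀ x ∈ R, ∃ p q : EuclideanSpace ℝ (Fin 3),
      (R : Set (EuclideanSpace ℝ (Fin 3))) \ {x, -x} = {p, -p, q, -q} ∧
      (∀ y ∈ ({p, -p, q, -q} : Set (EuclideanSpace ℝ (Fin 3))),
        (hemiTrace x y).Nonempty) ∧
      closure (hemiTrace x p ∪ hemiTrace x (-p)) = greatCircle x ∧
      closure (hemiTrace x q ∪ hemiTrace x (-q)) = greatCircle x := by
  have : IsAddTorsionFree E3 := .of_isTorsionFree ℝ E3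
  have hunit : ∀ v ∈ R, ‖v‖ = 1 := fun v hv => hS v (hRS hv)
  have h0 : (0 : E3) ∉ R := fun h => by simpa using hunit 0 h
  have hneg : ∀ v ∈ R, -v ∈ R := fun v hv =>
    neg_mem_of_minimal_cover hunit hRcover hmin hcard.ge hv
  refine ⟨exists_eq_three_pairs hneg h0 hcard, fun x hx => ?_⟩
  have hrest : ∀ y ∈ R \ {x, -x}, ‖y‖ = 1 ∧ |⟪x, y⟫| < 1 := by
    intro y hy
    simp only [mem_sdiff, mem_insert, mem_singleton, not_or] at hy
    exact ⟨hunit y hy.1, abs_real_inner_lt_one_of_ne (hunit x hx) (hunit y hy.1) hy.2.1 hy.2.2⟩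
  obtain ⟨p, q, hpq⟩ := exists_eq_pair_pair (neg_mem_sdiff_pair hneg x)
    (fun h => h0 (mem_sdiff.1 h).1) (by have := card_sdiff_pair_add_two hneg h0 hx; omega)
  have hp := hrest p (by simp [hpq])
  have hq := hrest q (by simp [hpq])
  refine ⟨p, q, by simpa using congrArg ((↑) : Finset E3 → Set E3) hpq, fun y hy => ?_,
    closure_hemiTrace_union_hemiTrace_neg (hunit x hx) hp.1 hp.2,
    closure_hemiTrace_union_hemiTrace_neg (hunit x hx) hq.1 hq.2⟩
  obtain ⟨hy1, hy2⟩ := hrest y (by rw [hpq]; simpa using hy)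
  exact hemiTrace_nonempty (hunit x hx) hy1 hy2

/-- If a finite set of open unit hemispheres covers `S²` and has a minimal
covering subset `R` of size exactly `6`, then `R` consists of the six
hemispheres determined by three mutually distinct pairs of opposite unit
vectors, and for every member `x` of `R`, the nonempty traces of the
remaining five hemispheres on the great circle `∂H(x)` are the traces of the
four members other than `±x` and form two antipodal pairs of open semicircles
(the closure of the union of each antipodal pair is the whole great circle). -/
theorem minimal_six_cover_structure
    (S : Finset (EuclideanSpace ℝ (Fin 3))) (hS : ∀ v ∈ S, ‖v‖ = 1)
    (hScover : unitSphere ⊆ ⋃ v ∈ S, openHemisphere v)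
    (R : Finset (EuclideanSpace ℝ (Fin 3))) (hRS : R ⊆ S) (hcard : R.card = 6)
    (hRcover : unitSphere ⊆ ⋃ v ∈ R, openHemisphere v)
    (hmin : ∀ s ∈ R, ¬ unitSphere ⊆ ⋃ v ∈ R.erase s, openHemisphere v) :
    (∃ u v w : EuclideanSpace ℝ (Fin 3), R = {u, -u, v, -v, w, -w}) ∧
    ∀ x ∈ R, ∃ p q : EuclideanSpace ℝ (Fin 3),
      (R : Set (EuclideanSpace ℝ (Fin 3))) \ {x, -x} = {p, -p, q, -q} ∧
      (∀ y ∈ ({p, -p, q, -q} : Set (EuclideanSpace ℝ (Fin 3))),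
        (hemiTrace x y).Nonempty) ∧
      closure (hemiTrace x p ∪ hemiTrace x (-p)) = greatCircle x ∧
      closure (hemiTrace x q ∪ hemiTrace x (-q)) = greatCircle x :=
  minimal_six_cover_structure_general S hS R hRS hcard hRcover hmin
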